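/- For all coordinate vectors U = (u₁,u₂,u₃,u₄,U₅,U₆) and V = (v₁,v₂,v₃,v₄,V₅,V₆) in ℝ⁴ × ℝ^(2s) × ℝ^(2s): (i) L(U)ᵀ·η·L(U) = η, where η is the N×N symmetric matrix with η_{1,N} = η_{N,1} = η_{2,N−1} = η_{N−1,2} = 1, ηᵢᵢ = 1 for 3 ≤ i ≤ N−2, and all other entries 0; (ii) L(U) is invertible and L(U)⁻¹·L(V) = L(W), where W = (w₁,w₂,w₃,w₄,W₅,W₆) is given by: w₁ = v₁ − u₁; w₂ = v₂ − u₂; w₃ = v₃ − e^(u₁−u₂−v₁+v₂)·u₃; w₄ = v₄ + (1/√2)·e^(u₂−v₁−v₂)·(e^(u₁)·⟨U₅,U₆⟩ − e^(v₁)·⟨U₆,V₅⟩) − (1/4)·e^(2(u₂−v₂))·v₃·‖U₆‖² + (1/4)·e^(u₁+u₂−v₁−v₂)·(u₃·‖U₆‖² − 4·u₄); W₅ = V₅ + (1/√2)·e^(u₂−v₂)·v₃·U₆ − (1/2)·e^(u₁−v₁)·(√2·u₃·U₆ + 2·U₅); W₆ = V₆ − e^(u₂−v₂)·U₆. In particular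 the matrices L(Υ) form a group. -/

import Mathlib

/-!
Every `L(Υ)` factors as `D(e^{Υ₁}, e^{Υ₂}) · L(0, 0, Υ₃, Υ₄, Υ₅, Υ₆)` with
`D(t₁, t₂) = diag(t₁, t₂, 1, …, 1, t₂⁻¹, t₁⁻¹)` in the split torus and the second factor unipotent.
Both kinds of factors preserve `η`, the unipotent factors form a group with a polynomial law, and
conjugating a unipotent factor by `D(t)` only rescales its coordinates. This gives a closed-form
product law `L(U) L(W) = L(…)`; the coordinates `W` of the statement are those for which it
returns `L(V)`. Invertibility follows from `L(U)ᵀ η L(U) = η`, which forces `(det L(U))² = 1`.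
-/

open Matrix

/-- Index type for an `N×N` matrix with `N = 2s+4`: indices `1,2`, then `2s` middle
indices, then indices `N−1, N`. -/
abbrev SolvIdx2 (s : ℕ) := Fin 2 ⊕ Fin (2 * s) ⊕ Fin 2

/-- The solvable coset representative `L(Υ)` of `SO(2,2+2s)/(SO(2)×SO(2+2s))` in the
solvable coordinates `Υ = (Υ₁,Υ₂,Υ₃,Υ₄,Υ₅,Υ₆) ∈ ℝ⁴ × ℝ^{2s} × ℝ^{2s}`. -/
noncomputable def Lsolv2 (s : ℕ) (a₁ a₂ a₃ a₄ : ℝ) (A₅ A₆ : Fin (2 * s) → ℝ) :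
    Matrix (SolvIdx2 s) (SolvIdx2 s) ℝ :=
  Matrix.of fun i j =>
    match i, j with
    | Sum.inl i, Sum.inl j =>
        if i = 0 ∧ j = 0 then Real.exp a₁
        else if i = 0 ∧ j = 1 then Real.exp a₁ / Real.sqrt 2 * a₃
        else if i = 1 ∧ j = 1 then Real.exp a₂
        else 0
    | Sum.inl i, Sum.inr (Sum.inl k) =>
        if i = 0 then (1 / 2) * Real.exp a₁ * (Real.sqrt 2 * A₅ k + a₃ * A₆ k)
        else Real.exp a₂ / Real.sqrt 2 * A₆ k
    | Sum.inl i, Sum.inr (Sum.inr j) =>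
        if i = 0 then
          (if j = 0 then
              Real.exp a₁ * (-(1 / 2) * (∑ k, A₅ k * A₆ k)
                - a₃ * (∑ k, A₆ k ^ 2) / (4 * Real.sqrt 2) + a₄ / Real.sqrt 2)
            else -(1 / 4) * Real.exp a₁ * ((∑ k, A₅ k ^ 2) + 2 * a₃ * a₄))
        else
          (if j = 0 then -(1 / 4) * Real.exp a₂ * (∑ k, A₆ k ^ 2)
            else -(Real.exp a₂ / Real.sqrt 2) * a₄)
    | Sum.inr (Sum.inl k), Sum.inr (Sum.inl l) => if k = l then 1 else 0
    | Sum.inr (Sum.inl k), Sum.inr (Sum.inr j) =>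
        if j = 0 then -(A₆ k / Real.sqrt 2) else -(A₅ k / Real.sqrt 2)
    | Sum.inr (Sum.inr i), Sum.inr (Sum.inr j) =>
        if i = 0 ∧ j = 0 then Real.exp (-a₂)
        else if i = 0 ∧ j = 1 then -(Real.exp (-a₂) / Real.sqrt 2) * a₃
        else if i = 1 ∧ j = 1 then Real.exp (-a₁)
        else 0
    | _, _ => 0

/-- The `N×N` symmetric matrix `η` with `η_{1,N} = η_{N,1} = η_{2,N−1} = η_{N−1,2} = 1`,
`ηᵢᵢ = 1` for `3 ≤ i ≤ N−2`, and all other entries `0`. -/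
def etaSolv2 (s : ℕ) : Matrix (SolvIdx2 s) (SolvIdx2 s) ℝ :=
  Matrix.of fun i j =>
    match i, j with
    | Sum.inl i, Sum.inr (Sum.inr j) => if (i = 0 ∧ j = 1) ∨ (i = 1 ∧ j = 0) then 1 else 0
    | Sum.inr (Sum.inr i), Sum.inl j => if (i = 0 ∧ j = 1) ∨ (i = 1 ∧ j = 0) then 1 else 0
    | Sum.inr (Sum.inl k), Sum.inr (Sum.inl l) => if k = l then 1 else 0
    | _, _ => 0

open Real

lemma sum_mul_eq_dotProduct {ι R : Type*} [Fintype ι] [Mul R] [AddCommMonoid R] (A B : ι → R) :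
    ∑ k, A k * B k = A ⬝ᵥ B :=
  rfl

lemma sum_sq_eq_dotProduct {ι R : Type*} [Fintype ι] [CommSemiring R] (A : ι → R) :
    ∑ k, A k ^ 2 = A ⬝ᵥ A := by
  simp only [dotProduct, sq]

lemma sqrt_two_sq : √2 ^ 2 = 2 := sq_sqrt zero_le_two

lemma sqrt_two_pow_three : √2 ^ 3 = 2 * √2 := by rw [pow_succ, sqrt_two_sq]

lemma isUnit_of_transpose_mul_mul_eq {n R : Type*} [Fintype n] [DecidableEq n] [CommRing R]
    {A J : Matrix n n R} (hJ : IsUnit J.det) (h : Aᵀ * J * A = J) : IsUnit A := by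
  have hdet : J.det * (A.det * A.det) = J.det * 1 := by
    have := congrArg det h
    rw [det_mul, det_mul, det_transpose] at this
    linear_combination this
  exact (isUnit_iff_isUnit_det A).mpr (IsUnit.of_mul_eq_one _ (hJ.mul_left_cancel hdet))

namespace SolvIdx2

variable {s : ℕ} {m n R : Type*}

def midRow (M : Matrix m (SolvIdx2 s) R) (i : m) : Fin (2 * s) → R := fun k => M i (.inr (.inl k))

def midCol (M : Matrix (SolvIdx2 s) n R) (j : n) : Fin (2 * s) → R := fun k => M (.inr (.inl k)) j

lemma mul_apply [NonUnitalNonAssocSemiring R] (M : Matrix m (SolvIdx2 s) R)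
    (M' : Matrix (SolvIdx2 s) n R) (i : m) (j : n) :
    (M * M') i j = M i (.inl 0) * M' (.inl 0) j + M i (.inl 1) * M' (.inl 1) j
      + midRow M i ⬝ᵥ midCol M' j
      + M i (.inr (.inr 0)) * M' (.inr (.inr 0)) j + M i (.inr (.inr 1)) * M' (.inr (.inr 1)) j := by
  simp only [Matrix.mul_apply, Fintype.sum_sum_type, Fin.sum_univ_two, dotProduct, midRow, midCol,
    add_assoc]

lemma transpose_mul_etaSolv2_mul_apply (M : Matrix (SolvIdx2 s) m ℝ) (M' : Matrix (SolvIdx2 s) n ℝ)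
    (i : m) (j : n) :
    (Mᵀ * etaSolv2 s * M') i j = M (.inl 0) i * M' (.inr (.inr 1)) j
      + M (.inl 1) i * M' (.inr (.inr 0)) j + midCol M i ⬝ᵥ midCol M' j
      + M (.inr (.inr 0)) i * M' (.inl 1) j + M (.inr (.inr 1)) i * M' (.inl 0) j := by
  simp only [Matrix.mul_apply, Fintype.sum_sum_type, Fin.sum_univ_two, transpose_apply, etaSolv2,
    of_apply, dotProduct, midCol, Fin.isValue, mul_zero, add_zero, Finset.sum_const_zero, zero_ne_one,
    one_ne_zero, and_false, and_true, and_self, or_self, or_true, or_false, ↓reduceIte, mul_one,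
    zero_add, mul_ite, Finset.sum_ite_eq', Finset.mem_univ]
  ring

end SolvIdx2

open SolvIdx2

lemma etaSolv2_mul_self (s : ℕ) : etaSolv2 s * etaSolv2 s = 1 := by
  ext i j
  rcases i with i | k | i <;> rcases j with j | l | j <;> (try fin_cases i) <;> (try fin_cases j) <;>
    simp [etaSolv2, Matrix.mul_apply, Fintype.sum_sum_type, Matrix.one_apply]

noncomputable def solvTorus (s : ℕ) (t₁ t₂ : ℝ) : Matrix (SolvIdx2 s) (SolvIdx2 s) ℝ :=
  diagonal (Sum.elim ![t₁, t₂] (Sum.elim 1 ![t₂⁻¹, t₁⁻¹]))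

lemma solvTorus_mul (s : ℕ) (t₁ t₂ t₁' t₂' : ℝ) :
    solvTorus s t₁ t₂ * solvTorus s t₁' t₂' = solvTorus s (t₁ * t₁') (t₂ * t₂') := by
  rw [solvTorus, solvTorus, solvTorus, diagonal_mul_diagonal]
  congr 1
  ext (i | k | i) <;> (try fin_cases i) <;> simp [mul_comm]

lemma transpose_solvTorus_mul_etaSolv2_mul (s : ℕ) {t₁ t₂ : ℝ} (h₁ : t₁ ≠ 0) (h₂ : t₂ ≠ 0) :
    (solvTorus s t₁ t₂)ᵀ * etaSolv2 s * solvTorus s t₁ t₂ = etaSolv2 s := by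
  ext i j
  rcases i with i | k | i <;> rcases j with j | l | j <;> (try fin_cases i) <;> (try fin_cases j) <;>
    simp [solvTorus, etaSolv2, h₁, h₂]

lemma Lsolv2_eq_solvTorus_mul (s : ℕ) (a₁ a₂ a₃ a₄ : ℝ) (A₅ A₆ : Fin (2 * s) → ℝ) :
    Lsolv2 s a₁ a₂ a₃ a₄ A₅ A₆ = solvTorus s (exp a₁) (exp a₂) * Lsolv2 s 0 0 a₃ a₄ A₅ A₆ := by
  ext i j
  rcases i with i | k | i <;> rcases j with j | l | j <;> (try fin_cases i) <;> (try fin_cases j) <;>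
    simp [solvTorus, Lsolv2, Real.exp_neg] <;> ring

lemma Lsolv2_zero_mul_solvTorus (s : ℕ) {t₁ t₂ : ℝ} (h₁ : t₁ ≠ 0) (h₂ : t₂ ≠ 0)
    (x₃ x₄ : ℝ) (X₅ X₆ : Fin (2 * s) → ℝ) :
    Lsolv2 s 0 0 x₃ x₄ X₅ X₆ * solvTorus s t₁ t₂ =
      solvTorus s t₁ t₂ * Lsolv2 s 0 0 (t₂ / t₁ * x₃) (x₄ / (t₁ * t₂)) (t₁⁻¹ • X₅) (t₂⁻¹ • X₆) := by
  ext i j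
  rcases i with i | k | i <;> rcases j with j | l | j <;> (try fin_cases i) <;> (try fin_cases j) <;>
    simp only [solvTorus, Lsolv2, Matrix.of_apply, mul_diagonal, diagonal_mul, sum_mul_eq_dotProduct,
      sum_sq_eq_dotProduct] <;>
    simp [smul_dotProduct, dotProduct_smul] <;> field_simp

section

variable (s : ℕ) (a₁ a₂ a₃ a₄ : ℝ) (A₅ A₆ : Fin (2 * s) → ℝ)

lemma midRow_Lsolv2_inl_zero :
    midRow (Lsolv2 s a₁ a₂ a₃ a₄ A₅ A₆) (.inl 0) = (exp a₁ / 2) • (√2 • A₅ + a₃ • A₆) := by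
  ext k
  simp only [midRow, Lsolv2, Matrix.of_apply, Pi.smul_apply, Pi.add_apply, smul_eq_mul, ↓reduceIte]
  ring

lemma midRow_Lsolv2_inl_one :
    midRow (Lsolv2 s a₁ a₂ a₃ a₄ A₅ A₆) (.inl 1) = (exp a₂ / √2) • A₆ := by
  ext k; simp [midRow, Lsolv2]

lemma midRow_Lsolv2_inr_inl (l : Fin (2 * s)) :
    midRow (Lsolv2 s a₁ a₂ a₃ a₄ A₅ A₆) (.inr (.inl l)) = Pi.single l 1 := by
  ext k; simp [midRow, Lsolv2, Pi.single_apply, eq_comm]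

lemma midRow_Lsolv2_inr_inr (i : Fin 2) :
    midRow (Lsolv2 s a₁ a₂ a₃ a₄ A₅ A₆) (.inr (.inr i)) = 0 := by
  ext k; simp [midRow, Lsolv2]

lemma midCol_Lsolv2_inl (j : Fin 2) : midCol (Lsolv2 s a₁ a₂ a₃ a₄ A₅ A₆) (.inl j) = 0 := by
  ext k; simp [midCol, Lsolv2]

lemma midCol_Lsolv2_inr_inl (l : Fin (2 * s)) :
    midCol (Lsolv2 s a₁ a₂ a₃ a₄ A₅ A₆) (.inr (.inl l)) = Pi.single l 1 := by
  ext k; simp [midCol, Lsolv2, Pi.single_apply]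

lemma midCol_Lsolv2_inr_inr_zero :
    midCol (Lsolv2 s a₁ a₂ a₃ a₄ A₅ A₆) (.inr (.inr 0)) = -((√2)⁻¹ • A₆) := by
  ext k; simp [midCol, Lsolv2, div_eq_inv_mul]

lemma midCol_Lsolv2_inr_inr_one :
    midCol (Lsolv2 s a₁ a₂ a₃ a₄ A₅ A₆) (.inr (.inr 1)) = -((√2)⁻¹ • A₅) := by
  ext k; simp [midCol, Lsolv2, div_eq_inv_mul]

end

set_option maxHeartbeats 400000 in
lemma Lsolv2_zero_mul_Lsolv2_zero (s : ℕ) (x₃ x₄ y₃ y₄ : ℝ) (X₅ X₆ Y₅ Y₆ : Fin (2 * s) → ℝ) :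
    Lsolv2 s 0 0 x₃ x₄ X₅ X₆ * Lsolv2 s 0 0 y₃ y₄ Y₅ Y₆ =
      Lsolv2 s 0 0 (x₃ + y₃) (x₄ + y₄ + X₆ ⬝ᵥ Y₅ / √2 - y₃ * (X₆ ⬝ᵥ X₆) / 4)
        (X₅ + Y₅ - (y₃ / √2) • X₆) (X₆ + Y₆) := by
  ext i j
  rcases i with i | k | i <;> rcases j with j | l | j <;> (try fin_cases i) <;> (try fin_cases j) <;>
    simp only [Fin.zero_eta, Fin.mk_one, SolvIdx2.mul_apply, midRow_Lsolv2_inl_zero,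
      midRow_Lsolv2_inl_one, midRow_Lsolv2_inr_inl, midRow_Lsolv2_inr_inr, midCol_Lsolv2_inl,
      midCol_Lsolv2_inr_inl, midCol_Lsolv2_inr_inr_zero, midCol_Lsolv2_inr_inr_one] <;>
    simp only [Lsolv2, Matrix.of_apply, sum_mul_eq_dotProduct, sum_sq_eq_dotProduct] <;>
    simp [dotProduct_add, dotProduct_smul, dotProduct_comm, Pi.single_apply, eq_comm] <;>
    field_simp <;> ring_nf <;> simp only [sqrt_two_sq, sqrt_two_pow_three] <;>
    ring_nf

lemma transpose_Lsolv2_zero_mul_etaSolv2_mul (s : ℕ) (x₃ x₄ : ℝ) (X₅ X₆ : Fin (2 * s) → ℝ) :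
    (Lsolv2 s 0 0 x₃ x₄ X₅ X₆)ᵀ * etaSolv2 s * Lsolv2 s 0 0 x₃ x₄ X₅ X₆ = etaSolv2 s := by
  ext i j
  rcases i with i | k | i <;> rcases j with j | l | j <;> (try fin_cases i) <;> (try fin_cases j) <;>
    simp only [Fin.zero_eta, Fin.mk_one, SolvIdx2.transpose_mul_etaSolv2_mul_apply,
      midCol_Lsolv2_inl, midCol_Lsolv2_inr_inl, midCol_Lsolv2_inr_inr_zero,
      midCol_Lsolv2_inr_inr_one] <;>
    simp only [Lsolv2, etaSolv2, Matrix.of_apply, sum_mul_eq_dotProduct, sum_sq_eq_dotProduct] <;>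
    simp [dotProduct_smul, dotProduct_comm, Pi.single_apply, eq_comm] <;>
    field_simp <;> ring_nf <;> simp only [sqrt_two_sq, sqrt_two_pow_three] <;>
    ring_nf

lemma transpose_Lsolv2_mul_etaSolv2_mul (s : ℕ) (a₁ a₂ a₃ a₄ : ℝ) (A₅ A₆ : Fin (2 * s) → ℝ) :
    (Lsolv2 s a₁ a₂ a₃ a₄ A₅ A₆)ᵀ * etaSolv2 s * Lsolv2 s a₁ a₂ a₃ a₄ A₅ A₆ = etaSolv2 s := by
  set D := solvTorus s (exp a₁) (exp a₂)
  set N := Lsolv2 s 0 0 a₃ a₄ A₅ A₆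
  calc (Lsolv2 s a₁ a₂ a₃ a₄ A₅ A₆)ᵀ * etaSolv2 s * Lsolv2 s a₁ a₂ a₃ a₄ A₅ A₆
      = Nᵀ * (Dᵀ * etaSolv2 s * D) * N := by
        simp only [Lsolv2_eq_solvTorus_mul s a₁, transpose_mul, Matrix.mul_assoc, D, N]
    _ = etaSolv2 s := by
        rw [transpose_solvTorus_mul_etaSolv2_mul s (exp_pos a₁).ne' (exp_pos a₂).ne',
          transpose_Lsolv2_zero_mul_etaSolv2_mul]

lemma Lsolv2_mul (s : ℕ) (u₁ u₂ u₃ u₄ w₁ w₂ w₃ w₄ : ℝ) (U₅ U₆ W₅ W₆ : Fin (2 * s) → ℝ) :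
    Lsolv2 s u₁ u₂ u₃ u₄ U₅ U₆ * Lsolv2 s w₁ w₂ w₃ w₄ W₅ W₆ =
      Lsolv2 s (u₁ + w₁) (u₂ + w₂) (exp (w₂ - w₁) * u₃ + w₃)
        (exp (-(w₁ + w₂)) * u₄ + w₄ + exp (-w₂) * (U₆ ⬝ᵥ W₅) / √2
          - w₃ * exp (-(2 * w₂)) * (U₆ ⬝ᵥ U₆) / 4)
        (exp (-w₁) • U₅ + W₅ - (w₃ * exp (-w₂) / √2) • U₆) (exp (-w₂) • U₆ + W₆) := by
  -- `D N · D' N' = (D D') (D'⁻¹ N D') N'`: conjugation by the torus, then the two product laws.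
  rw [Lsolv2_eq_solvTorus_mul s u₁, Lsolv2_eq_solvTorus_mul s w₁, Matrix.mul_assoc,
    ← Matrix.mul_assoc (Lsolv2 s 0 0 _ _ _ _),
    Lsolv2_zero_mul_solvTorus s (exp_pos w₁).ne' (exp_pos w₂).ne', Matrix.mul_assoc,
    Lsolv2_zero_mul_Lsolv2_zero, ← Matrix.mul_assoc, solvTorus_mul, ← exp_add, ← exp_add,
    Lsolv2_eq_solvTorus_mul s (u₁ + w₁)]
  congr 2
  · rw [Real.exp_sub]
  · simp only [Real.exp_neg, Real.exp_add, smul_dotProduct, dotProduct_smul, smul_eq_mul, two_mul]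
    field_simp
  · simp only [Real.exp_neg, smul_smul, div_mul_eq_mul_div]
  · rw [Real.exp_neg]

lemma Lsolv2_mul_leftQuotient (s : ℕ) (u₁ u₂ u₃ u₄ v₁ v₂ v₃ v₄ : ℝ) (U₅ U₆ V₅ V₆ : Fin (2 * s) → ℝ) :
    Lsolv2 s u₁ u₂ u₃ u₄ U₅ U₆ *
      Lsolv2 s (v₁ - u₁) (v₂ - u₂)
        (v₃ - Real.exp (u₁ - u₂ - v₁ + v₂) * u₃)
        (v₄ + (1 / Real.sqrt 2) * Real.exp (u₂ - v₁ - v₂) *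
            (Real.exp u₁ * (∑ k, U₅ k * U₆ k) - Real.exp v₁ * (∑ k, U₆ k * V₅ k))
          - (1 / 4) * Real.exp (2 * (u₂ - v₂)) * v₃ * (∑ k, U₆ k ^ 2)
          + (1 / 4) * Real.exp (u₁ + u₂ - v₁ - v₂) * (u₃ * (∑ k, U₆ k ^ 2) - 4 * u₄))
        (V₅ + ((1 / Real.sqrt 2) * Real.exp (u₂ - v₂) * v₃) • U₆
          - ((1 / 2) * Real.exp (u₁ - v₁)) • ((Real.sqrt 2 * u₃) • U₆ + (2 : ℝ) • U₅))
        (V₆ - Real.exp (u₂ - v₂) • U₆) = Lsolv2 s v₁ v₂ v₃ v₄ V₅ V₆ := by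
  rw [Lsolv2_mul]
  congr 1
  · ring
  · ring
  · simp only [Real.exp_sub, Real.exp_add]
    field_simp
    ring
  · simp only [sum_mul_eq_dotProduct, sum_sq_eq_dotProduct, dotProduct_add, dotProduct_sub,
      dotProduct_smul, smul_eq_mul, dotProduct_comm U₆ U₅, Real.exp_sub, Real.exp_add,
      Real.exp_neg, two_mul]
    field_simp
    ring_nf
    simp only [sqrt_two_sq]
    ring
  · ext k
    simp only [Pi.add_apply, Pi.sub_apply, Pi.smul_apply, smul_eq_mul, Real.exp_sub, Real.exp_add,
      Real.exp_neg]
    field_simp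
    ring_nf
    simp only [sqrt_two_sq]
    ring
  · ext k
    simp only [Pi.add_apply, Pi.sub_apply, Pi.smul_apply, smul_eq_mul, Real.exp_sub, Real.exp_neg]
    field_simp
    ring

theorem stmt_8_general (s : ℕ)
    (u₁ u₂ u₃ u₄ v₁ v₂ v₃ v₄ : ℝ) (U₅ U₆ V₅ V₆ : Fin (2 * s) → ℝ) :
    (Lsolv2 s u₁ u₂ u₃ u₄ U₅ U₆)ᵀ * etaSolv2 s * Lsolv2 s u₁ u₂ u₃ u₄ U₅ U₆ = etaSolv2 s ∧
    IsUnit (Lsolv2 s u₁ u₂ u₃ u₄ U₅ U₆) ∧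
    (Lsolv2 s u₁ u₂ u₃ u₄ U₅ U₆)⁻¹ * Lsolv2 s v₁ v₂ v₃ v₄ V₅ V₆ =
      Lsolv2 s (v₁ - u₁) (v₂ - u₂)
        (v₃ - Real.exp (u₁ - u₂ - v₁ + v₂) * u₃)
        (v₄ + (1 / Real.sqrt 2) * Real.exp (u₂ - v₁ - v₂) *
            (Real.exp u₁ * (∑ k, U₅ k * U₆ k) - Real.exp v₁ * (∑ k, U₆ k * V₅ k))
          - (1 / 4) * Real.exp (2 * (u₂ - v₂)) * v₃ * (∑ k, U₆ k ^ 2)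
          + (1 / 4) * Real.exp (u₁ + u₂ - v₁ - v₂) * (u₃ * (∑ k, U₆ k ^ 2) - 4 * u₄))
        (V₅ + ((1 / Real.sqrt 2) * Real.exp (u₂ - v₂) * v₃) • U₆
          - ((1 / 2) * Real.exp (u₁ - v₁)) • ((Real.sqrt 2 * u₃) • U₆ + (2 : ℝ) • U₅))
        (V₆ - Real.exp (u₂ - v₂) • U₆) := by
  have hη := transpose_Lsolv2_mul_etaSolv2_mul s u₁ u₂ u₃ u₄ U₅ U₆
  have hunit : IsUnit (Lsolv2 s u₁ u₂ u₃ u₄ U₅ U₆) :=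
    isUnit_of_transpose_mul_mul_eq (isUnit_det_of_left_inverse (etaSolv2_mul_self s)) hη
  refine ⟨hη, hunit, ?_⟩
  rw [← Lsolv2_mul_leftQuotient s u₁ u₂ u₃ u₄ v₁ v₂ v₃ v₄ U₅ U₆ V₅ V₆]
  exact nonsing_inv_mul_cancel_left _ _ ((isUnit_iff_isUnit_det _).mp hunit)

/-- **The solvable group law of `SO(2,2+2s)/(SO(2)×SO(2+2s))`.**
(i) `L(U)ᵀ·η·L(U) = η`; (ii) `L(U)` is invertible and `L(U)⁻¹·L(V) = L(W)` with the
explicit product coordinates `W`.  In particular the matrices `L(Υ)` form a group. -/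
theorem stmt_8 (s : ℕ) (hs : 1 ≤ s)
    (u₁ u₂ u₃ u₄ v₁ v₂ v₃ v₄ : ℝ) (U₅ U₆ V₅ V₆ : Fin (2 * s) → ℝ) :
    (Lsolv2 s u₁ u₂ u₃ u₄ U₅ U₆)ᵀ * etaSolv2 s * Lsolv2 s u₁ u₂ u₃ u₄ U₅ U₆ = etaSolv2 s ∧
    IsUnit (Lsolv2 s u₁ u₂ u₃ u₄ U₅ U₆) ∧
    (Lsolv2 s u₁ u₂ u₃ u₄ U₅ U₆)⁻¹ * Lsolv2 s v₁ v₂ v₃ v₄ V₅ V₆ =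
      Lsolv2 s (v₁ - u₁) (v₂ - u₂)
        (v₃ - Real.exp (u₁ - u₂ - v₁ + v₂) * u₃)
        (v₄ + (1 / Real.sqrt 2) * Real.exp (u₂ - v₁ - v₂) *
            (Real.exp u₁ * (∑ k, U₅ k * U₆ k) - Real.exp v₁ * (∑ k, U₆ k * V₅ k))
          - (1 / 4) * Real.exp (2 * (u₂ - v₂)) * v₃ * (∑ k, U₆ k ^ 2)
          + (1 / 4) * Real.exp (u₁ + u₂ - v₁ - v₂) * (u₃ * (∑ k, U₆ k ^ 2) - 4 * u₄))
        (V₅ + ((1 / Real.sqrt 2) * Real.exp (u₂ - v₂) * v₃) • U₆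
          - ((1 / 2) * Real.exp (u₁ - v₁)) • ((Real.sqrt 2 * u₃) • U₆ + (2 : ℝ) • U₅))
        (V₆ - Real.exp (u₂ - v₂) • U₆) :=
  stmt_8_general s u₁ u₂ u₃ u₄ v₁ v₂ v₃ v₄ U₅ U₆ V₅ V₆
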